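/- The Fresnel propagation of a centered Gaussian p_σ(x) = (2πσ²)^{−m/2} exp(−|x|²/(2σ²)) is given explicitly by D(p_σ)(x) = (σ̃/σ)^{m/2} c₀ exp(i|x|²/(2η²)) p_{σ̃}(x), where η² = (1 + σ⁴𝔣²)/𝔣, σ̃² = η²/(σ²𝔣), and c₀ is a complex constant of modulus 1 (depending on σ, 𝔣, m). -/

import Mathlib

open MeasureTheory Complex Real

noncomputable section

/-- The `m`-dimensional Fourier transform with the convention
`F(f)(ξ) = (2π)^{-m/2} ∫ exp(-i ξ·x) f(x) dx`. -/
def fourierTr (m : ℕ) (f : EuclideanSpace ℝ (Fin m) → ℂ)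
    (ξ : EuclideanSpace ℝ (Fin m)) : ℂ :=
  ((2 * Real.pi) ^ (-(m : ℝ) / 2) : ℝ) *
    ∫ x : EuclideanSpace ℝ (Fin m),
      Complex.exp (-Complex.I * ((inner ℝ ξ x : ℝ) : ℂ)) * f x

/-- The inverse Fourier transform, `F⁻¹(g)(x) = (2π)^{-m/2} ∫ exp(i ξ·x) g(ξ) dξ`. -/
def fourierInv (m : ℕ) (g : EuclideanSpace ℝ (Fin m) → ℂ)
    (x : EuclideanSpace ℝ (Fin m)) : ℂ :=
  ((2 * Real.pi) ^ (-(m : ℝ) / 2) : ℝ) *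
    ∫ ξ : EuclideanSpace ℝ (Fin m),
      Complex.exp (Complex.I * ((inner ℝ ξ x : ℝ) : ℂ)) * g ξ

/-- The Fresnel multiplier `m_f(ξ) = exp(-i|ξ|²/(2𝔣))`. -/
def fresnelSymbol (m : ℕ) (𝔣 : ℝ) (ξ : EuclideanSpace ℝ (Fin m)) : ℂ :=
  Complex.exp (-Complex.I * ((‖ξ‖ ^ 2 : ℝ) : ℂ) / (2 * (𝔣 : ℂ)))

/-- The Fresnel propagator `D(h) = F⁻¹(m_f · F(h))`. -/
def fresnelProp (m : ℕ) (𝔣 : ℝ) (h : EuclideanSpace ℝ (Fin m) → ℂ)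
    (x : EuclideanSpace ℝ (Fin m)) : ℂ :=
  fourierInv m (fun ξ => fresnelSymbol m 𝔣 ξ * fourierTr m h ξ) x

/-- The Fresnel convolution kernel
`k_f(x) = exp(−imπ/4)·(𝔣/(2π))^{m/2}·exp(i𝔣|x|²/2)`. -/
def fresnelKernel (m : ℕ) (𝔣 : ℝ) (x : EuclideanSpace ℝ (Fin m)) : ℂ :=
  Complex.exp (-Complex.I * m * Real.pi / 4) * ((𝔣 / (2 * Real.pi)) ^ ((m : ℝ) / 2) : ℝ) *
    Complex.exp (Complex.I * (𝔣 : ℂ) * ((‖x‖ ^ 2 : ℝ) : ℂ) / 2)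

/-- The chirp factor `n_f(x) = exp(i𝔣|x|²/2)`. -/
def fresnelChirp (m : ℕ) (𝔣 : ℝ) (x : EuclideanSpace ℝ (Fin m)) : ℂ :=
  Complex.exp (Complex.I * (𝔣 : ℂ) * ((‖x‖ ^ 2 : ℝ) : ℂ) / 2)

/-- The normalized centered Gaussian `p_σ(x) = (2πσ²)^{−m/2} exp(−|x|²/(2σ²))`. -/
def gaussianPeak (m : ℕ) (σ : ℝ) (x : EuclideanSpace ℝ (Fin m)) : ℂ :=
  (((2 * Real.pi * σ ^ 2) ^ (-(m : ℝ) / 2) : ℝ) : ℂ) *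
    Complex.exp (-((‖x‖ ^ 2 : ℝ) : ℂ) / (2 * (σ : ℂ) ^ 2))

/-! The Fourier transform of `p_σ` is `(2π)^{-m/2} exp(-σ²|ξ|²/2)`. The Fresnel symbol turns it
into the complex Gaussian `(2π)^{-m/2} exp(-q|ξ|²/2)` with `q = σ² + i/𝔣`, and since `Re q > 0` its
inverse transform is again a complex Gaussian, `(2π)^{-m} (2π/q)^{m/2} exp(-|x|²/(2q))`.
Splitting `1/q = 1/σ̃² - i/η²` produces the chirp and `p_σ̃`, and `|q| = σ σ̃` identifies the
modulus of the prefactor; its phase is `c₀`. -/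

lemma fourierTr_const_mul (m : ℕ) (c : ℂ) (f : EuclideanSpace ℝ (Fin m) → ℂ)
    (ξ : EuclideanSpace ℝ (Fin m)) :
    fourierTr m (fun x => c * f x) ξ = c * fourierTr m f ξ := by
  simp only [fourierTr, mul_left_comm _ c, integral_const_mul]

lemma fourierInv_eq_fourierTr_neg (m : ℕ) (g : EuclideanSpace ℝ (Fin m) → ℂ)
    (x : EuclideanSpace ℝ (Fin m)) : fourierInv m g x = fourierTr m g (-x) := by
  simp only [fourierInv, fourierTr, inner_neg_left, real_inner_comm x, ofReal_neg, mul_neg,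
    neg_mul, neg_neg]

lemma fourierTr_cexp_neg_mul_sq_norm (m : ℕ) {b : ℂ} (hb : 0 < b.re)
    (ξ : EuclideanSpace ℝ (Fin m)) :
    fourierTr m (fun x => cexp (-b * (‖x‖ : ℂ) ^ 2)) ξ =
      ((2 * π) ^ (-(m : ℝ) / 2) : ℝ) * (π / b) ^ ((m : ℂ) / 2) *
        cexp (-(‖ξ‖ : ℂ) ^ 2 / (4 * b)) := by
  have h := GaussianFourier.integral_cexp_neg_mul_sq_norm_add hb (-I) ξ
  rw [finrank_euclideanSpace_fin, neg_sq, I_sq, neg_one_mul] at h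
  simp only [fourierTr, ← Complex.exp_add, add_comm (-I * _), h, mul_assoc]

lemma fourierTr_gaussianPeak (m : ℕ) {σ : ℝ} (hσ : σ ≠ 0) (ξ : EuclideanSpace ℝ (Fin m)) :
    fourierTr m (gaussianPeak m σ) ξ =
      ((2 * π) ^ (-(m : ℝ) / 2) : ℝ) * cexp (-(σ : ℂ) ^ 2 / 2 * (‖ξ‖ : ℂ) ^ 2) := by
  have hb : 0 < (1 / (2 * (σ : ℂ) ^ 2)).re := by
    rw [← ofReal_ofNat, ← ofReal_pow, ← ofReal_mul, ← ofReal_one, ← ofReal_div, ofReal_re]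
    positivity
  have hpeak : gaussianPeak m σ = fun x => (((2 * π * σ ^ 2) ^ (-(m : ℝ) / 2) : ℝ) : ℂ) *
      cexp (-(1 / (2 * (σ : ℂ) ^ 2)) * (‖x‖ : ℂ) ^ 2) := by
    ext x
    simp only [gaussianPeak, ofReal_pow]
    ring_nf
  rw [hpeak, fourierTr_const_mul, fourierTr_cexp_neg_mul_sq_norm m hb]
  have hnorm : (π : ℂ) / (1 / (2 * (σ : ℂ) ^ 2)) = ((2 * π * σ ^ 2 : ℝ) : ℂ) := by
    push_cast; field_simp
  have hexp : -(‖ξ‖ : ℂ) ^ 2 / (4 * (1 / (2 * (σ : ℂ) ^ 2))) =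
      -(σ : ℂ) ^ 2 / 2 * (‖ξ‖ : ℂ) ^ 2 := by
    field_simp; ring
  have hcancel : (((2 * π * σ ^ 2) ^ (-(m : ℝ) / 2) : ℝ) : ℂ) *
      ((2 * π * σ ^ 2 : ℝ) : ℂ) ^ ((m : ℂ) / 2) = 1 := by
    rw [← ofReal_natCast, ← ofReal_ofNat, ← ofReal_div, ← ofReal_cpow (by positivity),
      ← ofReal_mul, ← Real.rpow_add (by positivity), neg_div, neg_add_cancel, Real.rpow_zero,
      ofReal_one]
  rw [hnorm, hexp]
  linear_combination
    (((2 * π) ^ (-(m : ℝ) / 2) : ℝ) : ℂ) * cexp (-(σ : ℂ) ^ 2 / 2 * (‖ξ‖ : ℂ) ^ 2) * hcancel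

lemma fresnelProp_gaussianPeak (m : ℕ) (𝔣 : ℝ) {σ : ℝ} (hσ : σ ≠ 0)
    (x : EuclideanSpace ℝ (Fin m)) :
    fresnelProp m 𝔣 (gaussianPeak m σ) x =
      ((2 * π) ^ (-(m : ℝ)) : ℝ) * (2 * π / ((σ : ℂ) ^ 2 + I / 𝔣)) ^ ((m : ℂ) / 2) *
        cexp (-(‖x‖ : ℂ) ^ 2 / (2 * ((σ : ℂ) ^ 2 + I / 𝔣))) := by
  set q : ℂ := (σ : ℂ) ^ 2 + I / 𝔣
  have hq : 0 < (q / 2).re := by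
    have : (q / 2).re = σ ^ 2 / 2 := by simp [q, ← ofReal_pow, ← ofReal_ofNat]
    rw [this]; positivity
  have hfun : (fun ξ => fresnelSymbol m 𝔣 ξ * fourierTr m (gaussianPeak m σ) ξ) =
      fun ξ => (((2 * π) ^ (-(m : ℝ) / 2) : ℝ) : ℂ) * cexp (-(q / 2) * (‖ξ‖ : ℂ) ^ 2) := by
    ext ξ
    rw [fresnelSymbol, fourierTr_gaussianPeak m hσ, mul_left_comm, ← Complex.exp_add]
    congr 2
    push_cast
    ring
  have hsq : (((2 * π) ^ (-(m : ℝ) / 2) : ℝ) : ℂ) * (((2 * π) ^ (-(m : ℝ) / 2) : ℝ) : ℂ) =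
      (((2 * π) ^ (-(m : ℝ)) : ℝ) : ℂ) := by
    rw [← ofReal_mul, ← Real.rpow_add (by positivity), add_halves]
  rw [fresnelProp, fourierInv_eq_fourierTr_neg, hfun, fourierTr_const_mul,
    fourierTr_cexp_neg_mul_sq_norm m hq, norm_neg, div_div_eq_mul_div, mul_comm (π : ℂ) 2,
    show 4 * (q / 2) = 2 * q by ring, ← hsq]
  ring

lemma inv_sq_add_I_div {σ 𝔣 : ℝ} (hσ : σ ≠ 0) (h𝔣 : 𝔣 ≠ 0) :
    ((σ : ℂ) ^ 2 + I / 𝔣)⁻¹ =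
      (((1 + σ ^ 4 * 𝔣 ^ 2) / (𝔣 * (σ ^ 2 * 𝔣)) : ℝ) : ℂ)⁻¹ -
        I * (((1 + σ ^ 4 * 𝔣 ^ 2) / 𝔣 : ℝ) : ℂ)⁻¹ := by
  have hD : 1 + (σ : ℂ) ^ 4 * (𝔣 : ℂ) ^ 2 ≠ 0 := by
    exact_mod_cast (by positivity : 1 + σ ^ 4 * 𝔣 ^ 2 ≠ 0)
  have hσ' : (σ : ℂ) ≠ 0 := ofReal_ne_zero.2 hσ
  have h𝔣' : (𝔣 : ℂ) ≠ 0 := ofReal_ne_zero.2 h𝔣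
  refine (eq_inv_of_mul_eq_one_left ?_).symm
  push_cast
  field_simp
  linear_combination -I_sq

lemma norm_sq_add_I_div {σ 𝔣 : ℝ} (hσ : 0 < σ) (h𝔣 : 𝔣 ≠ 0) :
    ‖(σ : ℂ) ^ 2 + I / 𝔣‖ = σ * √((1 + σ ^ 4 * 𝔣 ^ 2) / (𝔣 * (σ ^ 2 * 𝔣))) := by
  have : (σ : ℂ) ^ 2 + I / 𝔣 = ((σ ^ 2 : ℝ) : ℂ) + ((1 / 𝔣 : ℝ) : ℂ) * I := by
    push_cast; ring
  rw [this, norm_add_mul_I,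
    Real.sqrt_eq_iff_eq_sq (by positivity) (mul_nonneg hσ.le (Real.sqrt_nonneg _)), mul_pow,
    Real.sq_sqrt (by rw [mul_left_comm, ← sq]; positivity)]
  field_simp
  ring

lemma norm_two_pi_rpow_neg_mul_cpow {q : ℂ} {σ s : ℝ} (hσ : 0 < σ) (hs : 0 < s)
    (hq : ‖q‖ = σ * s) (m : ℕ) :
    ‖(((2 * π) ^ (-(m : ℝ)) : ℝ) : ℂ) * (2 * π / q) ^ ((m : ℂ) / 2)‖ =
      (s / σ) ^ ((m : ℝ) / 2) * (2 * π * s ^ 2) ^ (-(m : ℝ) / 2) := by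
  have hcast : (m : ℂ) / 2 = ((m / 2 : ℝ) : ℂ) := by push_cast; ring
  rw [norm_mul, norm_real, Real.norm_of_nonneg (by positivity), hcast, norm_cpow_real, norm_div,
    hq, norm_mul, Complex.norm_ofNat, norm_real, Real.norm_of_nonneg pi_pos.le,
    show -(m : ℝ) / 2 = -1 * (m / 2) by ring, show -(m : ℝ) = -2 * (m / 2) by ring,
    Real.rpow_mul (by positivity), Real.rpow_mul (by positivity),
    ← Real.mul_rpow (by positivity) (by positivity),
    ← Real.mul_rpow (by positivity) (by positivity)]
  congr 1
  rw [Real.rpow_neg (by positivity), Real.rpow_neg (by positivity), Real.rpow_one, Real.rpow_two]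
  field_simp

/-- The Gaussian-beam formula: with `η² = (1+σ⁴𝔣²)/𝔣` and `σ̃² = η²/(σ²𝔣)`,
`D(p_σ)(x) = (σ̃/σ)^{m/2}·c₀·exp(i|x|²/(2η²))·p_{σ̃}(x)` for some unimodular constant `c₀`. -/
theorem fresnelProp_gaussian (m : ℕ) (𝔣 σ : ℝ) (h𝔣 : 0 < 𝔣) (hσ : 0 < σ) :
    ∃ c₀ : ℂ, ‖c₀‖ = 1 ∧
      ∀ x : EuclideanSpace ℝ (Fin m),
        fresnelProp m 𝔣 (gaussianPeak m σ) x =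
          (((Real.sqrt ((1 + σ ^ 4 * 𝔣 ^ 2) / (𝔣 * (σ ^ 2 * 𝔣))) / σ) ^ ((m : ℝ) / 2) : ℝ) : ℂ) *
            c₀ *
            Complex.exp (Complex.I * ((‖x‖ ^ 2 : ℝ) : ℂ) /
              (2 * (((1 + σ ^ 4 * 𝔣 ^ 2) / 𝔣 : ℝ) : ℂ))) *
            gaussianPeak m (Real.sqrt ((1 + σ ^ 4 * 𝔣 ^ 2) / (𝔣 * (σ ^ 2 * 𝔣)))) x := by
  set s := √((1 + σ ^ 4 * 𝔣 ^ 2) / (𝔣 * (σ ^ 2 * 𝔣)))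
  set q : ℂ := (σ : ℂ) ^ 2 + I / 𝔣
  set K : ℂ := (((2 * π) ^ (-(m : ℝ)) : ℝ) : ℂ) * (2 * π / q) ^ ((m : ℂ) / 2)
  have hs2 : (s : ℂ) ^ 2 = (((1 + σ ^ 4 * 𝔣 ^ 2) / (𝔣 * (σ ^ 2 * 𝔣)) : ℝ) : ℂ) := by
    rw [← ofReal_pow, Real.sq_sqrt (by positivity)]
  have hK : ‖K‖ = (s / σ) ^ ((m : ℝ) / 2) * (2 * π * s ^ 2) ^ (-(m : ℝ) / 2) :=
    norm_two_pi_rpow_neg_mul_cpow hσ (Real.sqrt_pos.2 (by positivity))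
      (norm_sq_add_I_div hσ h𝔣.ne') m
  refine ⟨cexp (K.arg * I), norm_exp_ofReal_mul_I _, fun x => ?_⟩
  have hexp : -(‖x‖ : ℂ) ^ 2 / (2 * q) =
      I * ((‖x‖ ^ 2 : ℝ) : ℂ) / (2 * (((1 + σ ^ 4 * 𝔣 ^ 2) / 𝔣 : ℝ) : ℂ)) +
        -((‖x‖ ^ 2 : ℝ) : ℂ) / (2 * (s : ℂ) ^ 2) := by
    rw [hs2, div_eq_mul_inv, mul_inv, inv_sq_add_I_div hσ.ne' h𝔣.ne', ofReal_pow]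
    ring
  have hprop : fresnelProp m 𝔣 (gaussianPeak m σ) x = K * cexp (-(‖x‖ : ℂ) ^ 2 / (2 * q)) :=
    fresnelProp_gaussianPeak m 𝔣 hσ.ne' x
  rw [hprop, hexp, Complex.exp_add, gaussianPeak]
  conv_lhs => rw [← norm_mul_exp_arg_mul_I K, hK]
  push_cast
  ring
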